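/- arXiv:1412.7422 — 4 statements merged into one kernel-verified Lean document; each statement's English description precedes it below -/
import Mathlib

section
/- For an elementary cube of a discrete torsal line system in ℝP^3 (eight lines l, l₁, l₂, l₃, l₁₂, l₂₃, l₁₃, l₁₂₃ with combinatorially adjacent lines intersecting and combinatorially opposite lines skew), if one focal quadrilateral is planar then all six focal quadrilaterals are planar. -/
/-!
STATEMENT 5: for an elementary cube of a discrete torsal line system in `ℝP³`
(combinatorially adjacent lines intersect, combinatorially opposite lines of
each face are skew), if one focal quadrilateral is planar then all focal
quadrilaterals are planar.

`ℝP³` is modelled by linear subspaces of `ℝ⁴`: lines = rank-2 subspaces.  The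
lines of the cube are labelled by the subset of `{1,2,3}` of shifted
directions: `L0, L1, L2, L3, L12, L13, L23, L123`.  The `i`-th focal points are
the meets of lines adjacent in direction `i`; planarity of a quadruple of
points means its join has linear rank ≤ 3.
-/

open Submodule

abbrev V4 := Fin 4 → ℝ

def IsLine (L : Submodule ℝ V4) : Prop := Module.finrank ℝ L = 2

def Planar4 (a b c d : Submodule ℝ V4) : Prop :=
  Module.finrank ℝ ↥(a ⊔ b ⊔ c ⊔ d) ≤ 3


section TorsalHelpers
open Module


lemma frV4 : Module.finrank ℝ V4 = 4 := by simp [Module.finrank_pi]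

lemma sup_top {L M : Submodule ℝ V4} (hL : Module.finrank ℝ L = 2)
    (hM : Module.finrank ℝ M = 2) (h : L ⊓ M = ⊥) : L ⊔ M = ⊤ := by
  apply Submodule.eq_top_of_finrank_eq
  have h2 := Submodule.finrank_sup_add_finrank_inf_eq L M
  rw [h] at h2
  simp only [finrank_bot, add_zero] at h2
  rw [frV4, h2, hL, hM]

-- edge point
lemma edge_point {P Q R : Submodule ℝ V4} (hP : Module.finrank ℝ P = 2)
    (hQ : Module.finrank ℝ Q = 2) (hPQ : P ⊓ Q ≠ ⊥) (hPR : P ⊓ R = ⊥)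
    (hQR : Q ⊓ R ≠ ⊥) : ∃ v : V4, v ≠ 0 ∧ P ⊓ Q = span ℝ {v} := by
  obtain ⟨v, hv, hv0⟩ := Submodule.exists_mem_ne_zero_of_ne_bot hPQ
  refine ⟨v, hv0, ?_⟩
  have hle : span ℝ {v} ≤ P ⊓ Q := by
    rw [span_singleton_le_iff_mem]; exact hv
  have h1 : Module.finrank ℝ (span ℝ {v} : Submodule ℝ V4) = 1 :=
    finrank_span_singleton hv0
  rcases lt_or_ge (Module.finrank ℝ (P ⊓ Q : Submodule ℝ V4)) 2 with hlt | hge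
  · symm
    apply Submodule.eq_of_le_of_finrank_le hle
    omega
  · exfalso
    have hPQ2 : Module.finrank ℝ (P ⊓ Q : Submodule ℝ V4) = 2 := by
      have := Submodule.finrank_mono (inf_le_left : P ⊓ Q ≤ P)
      omega
    have e1 : P ⊓ Q = P := Submodule.eq_of_le_of_finrank_le inf_le_left (by omega)
    have e2 : P ⊓ Q = Q := Submodule.eq_of_le_of_finrank_le inf_le_right (by omega)
    have : P = Q := e1.symm.trans e2
    rw [← this] at hQR
    exact hQR hPR

-- line as span of pair
lemma line_pair {P Q R : Submodule ℝ V4} {u v : V4}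
    (hP : Module.finrank ℝ P = 2) (hu : u ≠ 0) (hv : v ≠ 0)
    (huP : u ∈ P) (huQ : u ∈ Q) (hvP : v ∈ P) (hvR : v ∈ R)
    (hQR : Q ⊓ R = ⊥) : P = span ℝ {u, v} := by
  have hind : LinearIndependent ℝ ![u, v] := by
    rw [LinearIndependent.pair_iff]
    intro s t hst
    by_contra hc
    push_neg at hc
    rcases eq_or_ne s 0 with hs | hs
    · subst hs
      simp only [zero_smul, zero_add] at hst
      rcases smul_eq_zero.1 hst with h | h
      · exact (hc rfl) h
      · exact hv h
    · have hsu : s • u = (-t) • v := by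
        linear_combination (norm := module) hst
      have hu' : u = (s⁻¹ * (-t)) • v := by
        rw [← smul_smul, ← hsu, smul_smul, inv_mul_cancel₀ hs, one_smul]
      have huR : u ∈ R := hu' ▸ Submodule.smul_mem R _ hvR
      have : u ∈ Q ⊓ R := ⟨huQ, huR⟩
      rw [hQR] at this
      exact hu this
  have hsp : Module.finrank ℝ (span ℝ {u, v} : Submodule ℝ V4) = 2 := by
    have h2 := finrank_span_eq_card hind
    have hr : Set.range ![u, v] = {u, v} := by
      simp [Matrix.range_cons, Matrix.range_empty, Set.pair_comm]
    rw [hr] at h2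
    simpa using h2
  symm
  apply Submodule.eq_of_le_of_finrank_le
  · rw [span_le]; rintro x (rfl | rfl)
    · exact huP
    · exact hvP
  · omega

lemma fr_single (x : V4) : Module.finrank ℝ (span ℝ {x} : Submodule ℝ V4) ≤ 1 := by
  rcases eq_or_ne x 0 with rfl | hx
  · rw [Submodule.span_zero_singleton]
    simp
  · rw [finrank_span_singleton hx]

lemma fr_triple (x y z : V4) :
    Module.finrank ℝ ((span ℝ {x} ⊔ span ℝ {y} ⊔ span ℝ {z}) : Submodule ℝ V4) ≤ 3 := by
  calc Module.finrank ℝ ((span ℝ {x} ⊔ span ℝ {y} ⊔ span ℝ {z}) : Submodule ℝ V4)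
      ≤ Module.finrank ℝ ((span ℝ {x} ⊔ span ℝ {y}) : Submodule ℝ V4)
        + Module.finrank ℝ (span ℝ {z} : Submodule ℝ V4) :=
        Submodule.finrank_add_le_finrank_add_finrank _ _
    _ ≤ (Module.finrank ℝ (span ℝ {x} : Submodule ℝ V4)
        + Module.finrank ℝ (span ℝ {y} : Submodule ℝ V4)) + 1 := by
        have := Submodule.finrank_add_le_finrank_add_finrank
          (span ℝ {x} : Submodule ℝ V4) (span ℝ {y})
        have := fr_single z
        omega
    _ ≤ 3 := by have := fr_single x; have := fr_single y; omega

lemma span_top_not_le_triple {x y z : V4}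
    (h : (⊤ : Submodule ℝ V4) ≤ span ℝ {x} ⊔ span ℝ {y} ⊔ span ℝ {z}) : False := by
  have h1 := fr_triple x y z
  have h2 : Module.finrank ℝ ((span ℝ {x} ⊔ span ℝ {y} ⊔ span ℝ {z}) : Submodule ℝ V4) = 4 := by
    rw [top_le_iff.1 h, finrank_top, frV4]
  omega

lemma range4 (x y z u : V4) : Set.range ![x, y, z, u] = {x, y, z, u} := by
  ext w
  simp [Fin.exists_fin_succ_pi, Fin.exists_fin_two]
  tauto

lemma span4 (x y z u : V4) : span ℝ ({x, y, z, u} : Set V4)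
    = span ℝ {x} ⊔ span ℝ {y} ⊔ span ℝ {z} ⊔ span ℝ {u} := by
  simp [Submodule.span_insert, sup_assoc]

lemma planar4_of_mem3 {x y z u : V4}
    (h : u ∈ span ℝ {x} ⊔ span ℝ {y} ⊔ span ℝ {z}) :
    Planar4 (span ℝ {x}) (span ℝ {y}) (span ℝ {u}) (span ℝ {z}) := by
  have hle : span ℝ {x} ⊔ span ℝ {y} ⊔ span ℝ {u} ⊔ span ℝ {z}
      ≤ span ℝ {x} ⊔ span ℝ {y} ⊔ span ℝ {z} := by
    apply sup_le
    apply sup_le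
    apply sup_le
    · exact le_sup_of_le_left le_sup_left
    · exact le_sup_of_le_left le_sup_right
    · rw [span_singleton_le_iff_mem]; exact h
    · exact le_sup_right
  have := Submodule.finrank_mono hle
  have := fr_triple x y z
  unfold Planar4
  omega

lemma planar4_dep {x y z u : V4}
    (h : Planar4 (span ℝ {x}) (span ℝ {y}) (span ℝ {z}) (span ℝ {u})) :
    ∃ α β γ δ : ℝ, α • x + β • y + γ • z + δ • u = 0 ∧ (α ≠ 0 ∨ β ≠ 0 ∨ γ ≠ 0 ∨ δ ≠ 0) := by
  by_contra hc
  push_neg at hc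
  have hind : LinearIndependent ℝ ![x, y, z, u] := by
    rw [Fintype.linearIndependent_iff]
    intro g hg
    have hsum : g 0 • x + g 1 • y + g 2 • z + g 3 • u = 0 := by
      have := hg
      rw [Fin.sum_univ_four] at this
      simpa [add_assoc] using this
    have h4 := hc (g 0) (g 1) (g 2) (g 3) hsum
    intro i
    fin_cases i <;> tauto
  have hcard := finrank_span_eq_card hind
  rw [range4, span4] at hcard
  unfold Planar4 at h
  simp only [Fintype.card_fin] at hcard
  omega

lemma indep4 {x y z u : V4}
    (h : (⊤ : Submodule ℝ V4) ≤ span ℝ {x} ⊔ span ℝ {y} ⊔ span ℝ {z} ⊔ span ℝ {u}) :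
    LinearIndependent ℝ ![x, y, z, u] := by
  apply linearIndependent_of_top_le_span_of_card_eq_finrank
  · rw [range4, span4]
    exact h
  · simp [frV4]

lemma coords {a b d f : V4} (hind : LinearIndependent ℝ ![a, b, d, f])
    {x1 x2 x3 x4 : ℝ} (h : x1 • a + x2 • b + x3 • d + x4 • f = 0) :
    x1 = 0 ∧ x2 = 0 ∧ x3 = 0 ∧ x4 = 0 := by
  have hg := Fintype.linearIndependent_iff.1 hind ![x1, x2, x3, x4] (by
    rw [Fin.sum_univ_four]
    simpa [add_assoc] using h)
  exact ⟨hg 0, hg 1, hg 2, hg 3⟩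

lemma ne_bot_comm {A B : Submodule ℝ V4} (h : A ⊓ B ≠ ⊥) : B ⊓ A ≠ ⊥ := by
  rwa [inf_comm] at h

lemma bot_comm' {A B : Submodule ℝ V4} (h : A ⊓ B = ⊥) : B ⊓ A = ⊥ := by
  rwa [inf_comm] at h

lemma m31 {S1 S2 S3 : Submodule ℝ V4} {x : V4} (h : x ∈ S1) : x ∈ S1 ⊔ S2 ⊔ S3 :=
  Submodule.mem_sup_left (Submodule.mem_sup_left h)
lemma m32 {S1 S2 S3 : Submodule ℝ V4} {x : V4} (h : x ∈ S2) : x ∈ S1 ⊔ S2 ⊔ S3 :=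
  Submodule.mem_sup_left (Submodule.mem_sup_right h)
lemma m33 {S1 S2 S3 : Submodule ℝ V4} {x : V4} (h : x ∈ S3) : x ∈ S1 ⊔ S2 ⊔ S3 :=
  Submodule.mem_sup_right h
lemma m41 {S1 S2 S3 S4 : Submodule ℝ V4} {x : V4} (h : x ∈ S1) : x ∈ S1 ⊔ S2 ⊔ S3 ⊔ S4 :=
  Submodule.mem_sup_left (m31 h)
lemma m42 {S1 S2 S3 S4 : Submodule ℝ V4} {x : V4} (h : x ∈ S2) : x ∈ S1 ⊔ S2 ⊔ S3 ⊔ S4 :=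
  Submodule.mem_sup_left (m32 h)
lemma m43 {S1 S2 S3 S4 : Submodule ℝ V4} {x : V4} (h : x ∈ S3) : x ∈ S1 ⊔ S2 ⊔ S3 ⊔ S4 :=
  Submodule.mem_sup_left (m33 h)
lemma m44 {S1 S2 S3 S4 : Submodule ℝ V4} {x : V4} (h : x ∈ S4) : x ∈ S1 ⊔ S2 ⊔ S3 ⊔ S4 :=
  Submodule.mem_sup_right h

lemma coeff_ne {P Q : Submodule ℝ V4} {x y : V4} {s : ℝ} (hx0 : x ≠ 0)
    (hxy : x = s • y) (hyP : y ∈ P) (hxQ : x ∈ Q) (hPQ : P ⊓ Q = ⊥) : False := by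
  have hxP : x ∈ P := hxy ▸ Submodule.smul_mem P s hyP
  have : x ∈ P ⊓ Q := ⟨hxP, hxQ⟩
  rw [hPQ] at this
  exact hx0 this

lemma main_lemma
    (L0 L1 L2 L3 L12 L13 L23 L123 : Submodule ℝ V4)
    (h0 : IsLine L0) (h1 : IsLine L1) (h2 : IsLine L2) (h3 : IsLine L3)
    (h12 : IsLine L12) (h13 : IsLine L13) (h23 : IsLine L23) (h123 : IsLine L123)
    (a01 : L0 ⊓ L1 ≠ ⊥) (a02 : L0 ⊓ L2 ≠ ⊥) (a03 : L0 ⊓ L3 ≠ ⊥)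
    (a112 : L1 ⊓ L12 ≠ ⊥) (a113 : L1 ⊓ L13 ≠ ⊥)
    (a212 : L2 ⊓ L12 ≠ ⊥) (a223 : L2 ⊓ L23 ≠ ⊥)
    (a313 : L3 ⊓ L13 ≠ ⊥) (a323 : L3 ⊓ L23 ≠ ⊥)
    (a12123 : L12 ⊓ L123 ≠ ⊥) (a13123 : L13 ⊓ L123 ≠ ⊥) (a23123 : L23 ⊓ L123 ≠ ⊥)
    (s1 : L0 ⊓ L12 = ⊥) (s2 : L1 ⊓ L2 = ⊥)
    (s3 : L0 ⊓ L13 = ⊥) (s4 : L1 ⊓ L3 = ⊥)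
    (s5 : L0 ⊓ L23 = ⊥) (s6 : L2 ⊓ L3 = ⊥)
    (s7 : L1 ⊓ L123 = ⊥) (s8 : L12 ⊓ L13 = ⊥)
    (s9 : L2 ⊓ L123 = ⊥) (s10 : L12 ⊓ L23 = ⊥)
    (s11 : L3 ⊓ L123 = ⊥) (s12 : L13 ⊓ L23 = ⊥)
    (hone :
      Planar4 (L0 ⊓ L1) (L2 ⊓ L12) (L23 ⊓ L123) (L3 ⊓ L13) ∨
      Planar4 (L0 ⊓ L2) (L1 ⊓ L12) (L13 ⊓ L123) (L3 ⊓ L23) ∨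
      Planar4 (L0 ⊓ L3) (L1 ⊓ L13) (L12 ⊓ L123) (L2 ⊓ L23)) :
    Planar4 (L0 ⊓ L1) (L2 ⊓ L12) (L23 ⊓ L123) (L3 ⊓ L13) ∧
    Planar4 (L0 ⊓ L2) (L1 ⊓ L12) (L13 ⊓ L123) (L3 ⊓ L23) ∧
    Planar4 (L0 ⊓ L3) (L1 ⊓ L13) (L12 ⊓ L123) (L2 ⊓ L23) := by
  -- the twelve focal points
  obtain ⟨va, ha0, hEa⟩ := edge_point h0 h1 a01 s1 a112
  obtain ⟨vb, hb0, hEb⟩ := edge_point h0 h2 a02 s1 a212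
  obtain ⟨vc, hc0, hEc⟩ := edge_point h0 h3 a03 s3 a313
  obtain ⟨vd, hd0, hEd⟩ := edge_point h1 h12 a112 s2 (ne_bot_comm a212)
  obtain ⟨ve, he0, hEe⟩ := edge_point h1 h13 a113 s4 (ne_bot_comm a313)
  obtain ⟨vf, hf0, hEf⟩ := edge_point h2 h12 a212 (bot_comm' s2) (ne_bot_comm a112)
  obtain ⟨vg, hg0, hEg⟩ := edge_point h2 h23 a223 s6 (ne_bot_comm a323)
  obtain ⟨vh, hh0, hEh⟩ := edge_point h3 h13 a313 (bot_comm' s4) (ne_bot_comm a113)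
  obtain ⟨vi, hi0, hEi⟩ := edge_point h3 h23 a323 (bot_comm' s6) (ne_bot_comm a223)
  obtain ⟨vj, hj0, hEj⟩ := edge_point h12 h123 a12123 s8 (ne_bot_comm a13123)
  obtain ⟨vk, hk0, hEk⟩ := edge_point h13 h123 a13123 (bot_comm' s8) (ne_bot_comm a12123)
  obtain ⟨vm, hm0, hEm⟩ := edge_point h23 h123 a23123 (bot_comm' s10) (ne_bot_comm a12123)
  -- membership facts
  have mas : va ∈ L0 ⊓ L1 := by rw [hEa]; exact mem_span_singleton_self va
  have mbs : vb ∈ L0 ⊓ L2 := by rw [hEb]; exact mem_span_singleton_self vb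
  have mcs : vc ∈ L0 ⊓ L3 := by rw [hEc]; exact mem_span_singleton_self vc
  have mds : vd ∈ L1 ⊓ L12 := by rw [hEd]; exact mem_span_singleton_self vd
  have mes : ve ∈ L1 ⊓ L13 := by rw [hEe]; exact mem_span_singleton_self ve
  have mfs : vf ∈ L2 ⊓ L12 := by rw [hEf]; exact mem_span_singleton_self vf
  have mgs : vg ∈ L2 ⊓ L23 := by rw [hEg]; exact mem_span_singleton_self vg
  have mhs : vh ∈ L3 ⊓ L13 := by rw [hEh]; exact mem_span_singleton_self vh
  have mis : vi ∈ L3 ⊓ L23 := by rw [hEi]; exact mem_span_singleton_self vi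
  have mjs : vj ∈ L12 ⊓ L123 := by rw [hEj]; exact mem_span_singleton_self vj
  have mks : vk ∈ L13 ⊓ L123 := by rw [hEk]; exact mem_span_singleton_self vk
  have mms : vm ∈ L23 ⊓ L123 := by rw [hEm]; exact mem_span_singleton_self vm
  -- lines as spans of pairs
  have hL0 : L0 = span ℝ {va, vb} := line_pair h0 ha0 hb0 mas.1 mas.2 mbs.1 mbs.2 s2
  have hL1 : L1 = span ℝ {va, vd} := line_pair h1 ha0 hd0 mas.2 mas.1 mds.1 mds.2 s1
  have hL2 : L2 = span ℝ {vb, vf} := line_pair h2 hb0 hf0 mbs.2 mbs.1 mfs.1 mfs.2 s1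
  have hL12 : L12 = span ℝ {vd, vf} := line_pair h12 hd0 hf0 mds.2 mds.1 mfs.2 mfs.1 s2
  have hL3 : L3 = span ℝ {vc, vh} := line_pair h3 hc0 hh0 mcs.2 mcs.1 mhs.1 mhs.2 s3
  have hL13 : L13 = span ℝ {ve, vh} := line_pair h13 he0 hh0 mes.2 mes.1 mhs.2 mhs.1 s4
  have hL23 : L23 = span ℝ {vg, vi} := line_pair h23 hg0 hi0 mgs.2 mgs.1 mis.2 mis.1 s6
  have hL123 : L123 = span ℝ {vj, vk} := line_pair h123 hj0 hk0 mjs.2 mjs.1 mks.2 mks.1 s8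
  -- sups are top
  have T2 : L1 ⊔ L2 = ⊤ := sup_top h1 h2 s2
  have T4 : L1 ⊔ L3 = ⊤ := sup_top h1 h3 s4
  have T6 : L2 ⊔ L3 = ⊤ := sup_top h2 h3 s6
  have T8 : L12 ⊔ L13 = ⊤ := sup_top h12 h13 s8
  have T10 : L12 ⊔ L23 = ⊤ := sup_top h12 h23 s10
  have T12 : L13 ⊔ L23 = ⊤ := sup_top h13 h23 s12
  -- basis
  have hind : LinearIndependent ℝ ![va, vb, vd, vf] := by
    apply indep4
    rw [← T2]
    apply sup_le
    · rw [hL1, span_le]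
      rintro x (rfl | rfl)
      · exact m41 (mem_span_singleton_self x)
      · exact m43 (mem_span_singleton_self x)
    · rw [hL2, span_le]
      rintro x (rfl | rfl)
      · exact m42 (mem_span_singleton_self x)
      · exact m44 (mem_span_singleton_self x)
  -- coordinates
  obtain ⟨c1, c2, hcc⟩ := mem_span_pair.1 (by rw [← hL0]; exact mcs.1 : vc ∈ span ℝ {va, vb})
  obtain ⟨e1, e3, hec⟩ := mem_span_pair.1 (by rw [← hL1]; exact mes.1 : ve ∈ span ℝ {va, vd})
  obtain ⟨g2, g4, hgc⟩ := mem_span_pair.1 (by rw [← hL2]; exact mgs.1 : vg ∈ span ℝ {vb, vf})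
  obtain ⟨ic, ih, hic'⟩ := mem_span_pair.1 (by rw [← hL3]; exact mis.1 : vi ∈ span ℝ {vc, vh})
  obtain ⟨j3, j4, hjc⟩ := mem_span_pair.1 (by rw [← hL12]; exact mjs.1 : vj ∈ span ℝ {vd, vf})
  obtain ⟨ke, kh, hkc⟩ := mem_span_pair.1 (by rw [← hL13]; exact mks.1 : vk ∈ span ℝ {ve, vh})
  obtain ⟨mg, mi, hmc'⟩ := mem_span_pair.1 (by rw [← hL23]; exact mms.1 : vm ∈ span ℝ {vg, vi})
  obtain ⟨mj, mk, hmc''⟩ := mem_span_pair.1 (by rw [← hL123]; exact mms.2 : vm ∈ span ℝ {vj, vk})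
  -- coordinates of vh
  have hhT : vh ∈ L1 ⊔ L2 := by rw [T2]; exact mem_top
  obtain ⟨p, hp, q, hq, hpq⟩ := mem_sup.1 hhT
  obtain ⟨hh1, hh3, hpc⟩ := mem_span_pair.1 (by rw [← hL1]; exact hp : p ∈ span ℝ {va, vd})
  obtain ⟨hh2, hh4, hqc⟩ := mem_span_pair.1 (by rw [← hL2]; exact hq : q ∈ span ℝ {vb, vf})
  have hhc : hh1 • va + hh2 • vb + hh3 • vd + hh4 • vf = vh := by
    linear_combination (norm := module) hpc + hqc + hpq
  clear hpc hqc hpq hp hq hhT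
  -- nonvanishing of coefficients
  have hc1 : c1 ≠ 0 := by
    intro hz
    exact coeff_ne hc0 (by linear_combination (norm := module) -hcc + hz • va) mbs.2 mcs.2 s6
  have hc2 : c2 ≠ 0 := by
    intro hz
    exact coeff_ne hc0 (by linear_combination (norm := module) -hcc + hz • vb) mas.2 mcs.2 s4
  have he1 : e1 ≠ 0 := by
    intro hz
    exact coeff_ne he0 (by linear_combination (norm := module) -hec + hz • va) mds.2 mes.2 s8
  have he3 : e3 ≠ 0 := by
    intro hz
    exact coeff_ne he0 (by linear_combination (norm := module) -hec + hz • vd) mas.1 mes.2 s3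
  have hg2 : g2 ≠ 0 := by
    intro hz
    exact coeff_ne hg0 (by linear_combination (norm := module) -hgc + hz • vb) mfs.2 mgs.2 s10
  have hg4 : g4 ≠ 0 := by
    intro hz
    exact coeff_ne hg0 (by linear_combination (norm := module) -hgc + hz • vf) mbs.1 mgs.2 s5
  have hicn : ic ≠ 0 := by
    intro hz
    exact coeff_ne hi0 (by linear_combination (norm := module) -hic' + hz • vc) mhs.2 mis.2 s12
  have hihn : ih ≠ 0 := by
    intro hz
    exact coeff_ne hi0 (by linear_combination (norm := module) -hic' + hz • vh) mcs.1 mis.2 s5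
  have hj3 : j3 ≠ 0 := by
    intro hz
    exact coeff_ne hj0 (by linear_combination (norm := module) -hjc + hz • vd) mfs.1 mjs.2 s9
  have hj4 : j4 ≠ 0 := by
    intro hz
    exact coeff_ne hj0 (by linear_combination (norm := module) -hjc + hz • vf) mds.1 mjs.2 s7
  have hken : ke ≠ 0 := by
    intro hz
    exact coeff_ne hk0 (by linear_combination (norm := module) -hkc + hz • ve) mhs.1 mks.2 s11
  have hkhn : kh ≠ 0 := by
    intro hz
    exact coeff_ne hk0 (by linear_combination (norm := module) -hkc + hz • vh) mes.1 mks.2 s7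
  have hmgn : mg ≠ 0 := by
    intro hz
    exact coeff_ne hm0 (by linear_combination (norm := module) -hmc' + hz • vg) mis.1 mms.2 s11
  have hmin : mi ≠ 0 := by
    intro hz
    exact coeff_ne hm0 (by linear_combination (norm := module) -hmc' + hz • vi) mgs.1 mms.2 s9
  have hmjn : mj ≠ 0 := by
    intro hz
    exact coeff_ne hm0 (by linear_combination (norm := module) -hmc'' + hz • vj) mks.1 mms.1 s12
  have hmkn : mk ≠ 0 := by
    intro hz
    exact coeff_ne hm0 (by linear_combination (norm := module) -hmc'' + hz • vk) mjs.1 mms.1 s10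
  -- nonvanishing of basis coordinates of vh and of the first coordinate of vi
  have hh2n : hh2 ≠ 0 := by
    intro hz
    apply span_top_not_le_triple (x := va) (y := vd) (z := vf)
    rw [← T8]
    apply sup_le
    · rw [hL12, span_le]
      rintro x (rfl | rfl)
      · exact m32 (mem_span_singleton_self x)
      · exact m33 (mem_span_singleton_self x)
    · rw [hL13, span_le]
      rintro x (rfl | rfl)
      · rw [← hec]
        exact add_mem (smul_mem _ _ (m31 (mem_span_singleton_self va)))
          (smul_mem _ _ (m32 (mem_span_singleton_self vd)))
      · have : (hh1 : ℝ) • va + hh3 • vd + hh4 • vf = x := by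
          linear_combination (norm := module) hhc - hz • vb
        rw [← this]
        exact add_mem (add_mem (smul_mem _ _ (m31 (mem_span_singleton_self va)))
          (smul_mem _ _ (m32 (mem_span_singleton_self vd))))
          (smul_mem _ _ (m33 (mem_span_singleton_self vf)))
  have hh3n : hh3 ≠ 0 := by
    intro hz
    apply span_top_not_le_triple (x := va) (y := vb) (z := vf)
    rw [← T6]
    apply sup_le
    · rw [hL2, span_le]
      rintro x (rfl | rfl)
      · exact m32 (mem_span_singleton_self x)
      · exact m33 (mem_span_singleton_self x)
    · rw [hL3, span_le]
      rintro x (rfl | rfl)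
      · rw [← hcc]
        exact add_mem (smul_mem _ _ (m31 (mem_span_singleton_self va)))
          (smul_mem _ _ (m32 (mem_span_singleton_self vb)))
      · have : (hh1 : ℝ) • va + hh2 • vb + hh4 • vf = x := by
          linear_combination (norm := module) hhc - hz • vd
        rw [← this]
        exact add_mem (add_mem (smul_mem _ _ (m31 (mem_span_singleton_self va)))
          (smul_mem _ _ (m32 (mem_span_singleton_self vb))))
          (smul_mem _ _ (m33 (mem_span_singleton_self vf)))
  have hh4n : hh4 ≠ 0 := by
    intro hz
    apply span_top_not_le_triple (x := va) (y := vb) (z := vd)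
    rw [← T4]
    apply sup_le
    · rw [hL1, span_le]
      rintro x (rfl | rfl)
      · exact m31 (mem_span_singleton_self x)
      · exact m33 (mem_span_singleton_self x)
    · rw [hL3, span_le]
      rintro x (rfl | rfl)
      · rw [← hcc]
        exact add_mem (smul_mem _ _ (m31 (mem_span_singleton_self va)))
          (smul_mem _ _ (m32 (mem_span_singleton_self vb)))
      · have : (hh1 : ℝ) • va + hh2 • vb + hh3 • vd = x := by
          linear_combination (norm := module) hhc - hz • vf
        rw [← this]
        exact add_mem (add_mem (smul_mem _ _ (m31 (mem_span_singleton_self va)))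
          (smul_mem _ _ (m32 (mem_span_singleton_self vb))))
          (smul_mem _ _ (m33 (mem_span_singleton_self vd)))
  have hi1n : ic * c1 + ih * hh1 ≠ 0 := by
    intro hz
    apply span_top_not_le_triple (x := vb) (y := vd) (z := vf)
    rw [← T10]
    apply sup_le
    · rw [hL12, span_le]
      rintro x (rfl | rfl)
      · exact m32 (mem_span_singleton_self x)
      · exact m33 (mem_span_singleton_self x)
    · rw [hL23, span_le]
      rintro x (rfl | rfl)
      · rw [← hgc]
        exact add_mem (smul_mem _ _ (m31 (mem_span_singleton_self vb)))
          (smul_mem _ _ (m33 (mem_span_singleton_self vf)))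
      · have : (ic * c2 + ih * hh2) • vb + (ih * hh3) • vd + (ih * hh4) • vf = x := by
          linear_combination (norm := module) hic' + ic • hcc + ih • hhc - hz • va
        rw [← this]
        exact add_mem (add_mem (smul_mem _ _ (m31 (mem_span_singleton_self vb)))
          (smul_mem _ _ (m32 (mem_span_singleton_self vd))))
          (smul_mem _ _ (m33 (mem_span_singleton_self vf)))
  -- independence of (vc, ve, vg, vh)
  have hindcegh : LinearIndependent ℝ ![vc, ve, vg, vh] := by
    apply indep4
    rw [← T12]
    apply sup_le
    · rw [hL13, span_le]
      rintro x (rfl | rfl)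
      · exact m42 (mem_span_singleton_self x)
      · exact m44 (mem_span_singleton_self x)
    · rw [hL23, span_le]
      rintro x (rfl | rfl)
      · exact m43 (mem_span_singleton_self x)
      · rw [← hic']
        exact add_mem (smul_mem _ _ (m41 (mem_span_singleton_self vc)))
          (smul_mem _ _ (m44 (mem_span_singleton_self vh)))
  have hE : g4 * e3 * hh1 * c2 - g4 * e3 * hh2 * c1 + g2 * c1 * e3 * hh4
      - g4 * c2 * e1 * hh3 ≠ 0 := by
    intro hz
    have hcomb : (g4 * (hh3 * e1 - e3 * hh1)) • vc + (-(c1 * g4 * hh3)) • ve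
        + (-(c1 * e3 * hh4)) • vg + (c1 * e3 * g4) • vh = 0 := by
      linear_combination (norm := module) (-(g4 * (hh3 * e1 - e3 * hh1))) • hcc
        + (c1 * g4 * hh3) • hec + (c1 * e3 * hh4) • hgc + (-(c1 * e3 * g4)) • hhc - hz • vb
    obtain ⟨-, -, -, h4'⟩ := coords hindcegh hcomb
    exact (mul_ne_zero (mul_ne_zero hc1 he3) hg4) h4'
  -- the master equation
  have hM : mg • vg + mi • vi = mj • vj + mk • vk := hmc'.trans hmc''.symm
  have key : (mi * ic * c1 + mi * ih * hh1 - mk * ke * e1 - mk * kh * hh1) • va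
      + (mg * g2 + mi * ic * c2 + mi * ih * hh2 - mk * kh * hh2) • vb
      + (mi * ih * hh3 - mj * j3 - mk * ke * e3 - mk * kh * hh3) • vd
      + (mg * g4 + mi * ih * hh4 - mj * j4 - mk * kh * hh4) • vf = 0 := by
    linear_combination (norm := module) hM + mg • hgc + mi • hic' + (mi * ic) • hcc
      + ((mi * ih - mk * kh)) • hhc - mj • hjc - mk • hkc - (mk * ke) • hec
  obtain ⟨AE, BE, DE, FE⟩ := coords hind key
  -- rewrite all quads in terms of spans of the focal vectors
  rw [hEa, hEb, hEc, hEd, hEe, hEf, hEg, hEh, hEi, hEj, hEk, hEm] at hone ⊢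
  -- basis expansions of vm, vk, vi
  have hmB : vm = (mi * ic * c1 + mi * ih * hh1) • va
      + (mg * g2 + mi * ic * c2 + mi * ih * hh2) • vb
      + (mi * ih * hh3) • vd + (mg * g4 + mi * ih * hh4) • vf := by
    linear_combination (norm := module) -hmc' - mg • hgc - mi • hic'
      - (mi * ic) • hcc - (mi * ih) • hhc
  have hkB : vk = (ke * e1 + kh * hh1) • va + (kh * hh2) • vb
      + (ke * e3 + kh * hh3) • vd + (kh * hh4) • vf := by
    linear_combination (norm := module) -hkc - ke • hec - kh • hhc
  have hiB : vi = (ic * c1 + ih * hh1) • va + (ic * c2 + ih * hh2) • vb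
      + (ih * hh3) • vd + (ih * hh4) • vf := by
    linear_combination (norm := module) -hic' - ic • hcc - ih • hhc
  -- from any one planar quadrilateral, derive the key scalar relation
  have hw : mi * ih - mk * kh = 0 := by
    rcases hone with hq | hq | hq
    · obtain ⟨al, be, ga, de, hdep, hnz⟩ := planar4_dep hq
      have hcomb : (al + ga * (mi * ic * c1 + mi * ih * hh1) + de * hh1) • va
          + (ga * (mg * g2 + mi * ic * c2 + mi * ih * hh2) + de * hh2) • vb
          + (ga * (mi * ih * hh3) + de * hh3) • vd
          + (be + ga * (mg * g4 + mi * ih * hh4) + de * hh4) • vf = 0 := by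
        linear_combination (norm := module) hdep - ga • hmB + de • hhc
      obtain ⟨A1, B1, D1, F1⟩ := coords hind hcomb
      have hga : ga ≠ 0 := by
        intro hz
        have hde : de = 0 := by
          have h' : de * hh3 = 0 := by linear_combination D1 - (mi * ih * hh3) * hz
          exact (mul_eq_zero.1 h').resolve_right hh3n
        have hal : al = 0 := by
          linear_combination A1 - (mi * ic * c1 + mi * ih * hh1) * hz - hh1 * hde
        have hbe : be = 0 := by
          linear_combination F1 - (mg * g4 + mi * ih * hh4) * hz - hh4 * hde
        rcases hnz with h | h | h | h <;> [exact h hal; exact h hbe; exact h hz; exact h hde]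
      have hde2 : ga * (mi * ih) + de = 0 := by
        have h' : (ga * (mi * ih) + de) * hh3 = 0 := by linear_combination D1
        exact (mul_eq_zero.1 h').resolve_right hh3n
      have hsb : mg * g2 + mi * ic * c2 = 0 := by
        have h' : ga * (mg * g2 + mi * ic * c2) = 0 := by
          linear_combination B1 - hh2 * hde2
        exact (mul_eq_zero.1 h').resolve_left hga
      have h'' : (mi * ih - mk * kh) * hh2 = 0 := by linear_combination BE - hsb
      exact (mul_eq_zero.1 h'').resolve_right hh2n
    · obtain ⟨al, be, ga, de, hdep, hnz⟩ := planar4_dep hq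
      have hcomb : (ga * (ke * e1 + kh * hh1) + de * (ic * c1 + ih * hh1)) • va
          + (al + ga * (kh * hh2) + de * (ic * c2 + ih * hh2)) • vb
          + (be + ga * (ke * e3 + kh * hh3) + de * (ih * hh3)) • vd
          + (ga * (kh * hh4) + de * (ih * hh4)) • vf = 0 := by
        linear_combination (norm := module) hdep - ga • hkB - de • hiB
      obtain ⟨A2, B2, D2, F2⟩ := coords hind hcomb
      have hF : ga * kh + de * ih = 0 := by
        have h' : (ga * kh + de * ih) * hh4 = 0 := by linear_combination F2
        exact (mul_eq_zero.1 h').resolve_right hh4n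
      have hde : de ≠ 0 := by
        intro hz
        have hga : ga = 0 := by
          have h' : ga * kh = 0 := by linear_combination hF - ih * hz
          exact (mul_eq_zero.1 h').resolve_right hkhn
        have hal : al = 0 := by
          linear_combination B2 - (kh * hh2) * hga - (ic * c2 + ih * hh2) * hz
        have hbe : be = 0 := by
          linear_combination D2 - (ke * e3 + kh * hh3) * hga - (ih * hh3) * hz
        rcases hnz with h | h | h | h <;> [exact h hal; exact h hbe; exact h hga; exact h hz]
      have hga : ga ≠ 0 := by
        intro hz
        have h' : de * ih = 0 := by linear_combination hF - kh * hz
        exact hde ((mul_eq_zero.1 h').resolve_right hihn)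
      have hD2 : ih * (ke * e1) - kh * (ic * c1) = 0 := by
        have h' : ga * (ih * (ke * e1) - kh * (ic * c1)) = 0 := by
          linear_combination ih * A2 - (ic * c1 + ih * hh1) * hF
        exact (mul_eq_zero.1 h').resolve_left hga
      have h'' : (mi * ih - mk * kh) * (ic * c1 + ih * hh1) = 0 := by
        linear_combination ih * AE + mk * hD2
      exact (mul_eq_zero.1 h'').resolve_right hi1n
    · obtain ⟨al, be, ga, de, hdep, hnz⟩ := planar4_dep hq
      have hcomb : (al * c1 + be * e1) • va + (al * c2 + de * g2) • vb
          + (be * e3 + ga * j3) • vd + (ga * j4 + de * g4) • vf = 0 := by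
        linear_combination (norm := module) hdep + al • hcc + be • hec + ga • hjc + de • hgc
      obtain ⟨A3, B3, D3, F3⟩ := coords hind hcomb
      have hal : al ≠ 0 := by
        intro hz
        have hbe : be = 0 := by
          have h' : be * e1 = 0 := by linear_combination A3 - c1 * hz
          exact (mul_eq_zero.1 h').resolve_right he1
        have hde : de = 0 := by
          have h' : de * g2 = 0 := by linear_combination B3 - c2 * hz
          exact (mul_eq_zero.1 h').resolve_right hg2
        have hga : ga = 0 := by
          have h' : ga * j3 = 0 := by linear_combination D3 - e3 * hbe
          exact (mul_eq_zero.1 h').resolve_right hj3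
        rcases hnz with h | h | h | h <;> [exact h hz; exact h hbe; exact h hga; exact h hde]
      have hga : ga ≠ 0 := by
        intro hz
        have hbe : be = 0 := by
          have h' : be * e3 = 0 := by linear_combination D3 - j3 * hz
          exact (mul_eq_zero.1 h').resolve_right he3
        have hal' : al = 0 := by
          have h' : al * c1 = 0 := by linear_combination A3 - e1 * hbe
          exact (mul_eq_zero.1 h').resolve_right hc1
        exact hal hal'
      have hD3 : c1 * j4 * g2 * e3 - j3 * e1 * c2 * g4 = 0 := by
        have h' : al * ga * (c1 * j4 * g2 * e3 - j3 * e1 * c2 * g4) = 0 := by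
          linear_combination (ga * j4 * g2 * e3) * A3 + (be * e1 * g4 * e3) * B3
            - (al * e1 * c2 * g4) * D3 - (be * e1 * g2 * e3) * F3
        rcases mul_eq_zero.1 h' with h | h
        · exact absurd h (mul_ne_zero hal hga)
        · exact h
      have h'' : (mi * ih - mk * kh) * (g4 * e3 * hh1 * c2 - g4 * e3 * hh2 * c1
          + g2 * c1 * e3 * hh4 - g4 * c2 * e1 * hh3) = 0 := by
        linear_combination mj * hD3 + (g2 * c1 * e3) * FE - (g4 * c2 * e1) * DE
          + (e3 * g4 * c2) * AE - (e3 * g4 * c1) * BE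
      exact (mul_eq_zero.1 h'').resolve_right hE
  -- now construct all three planar quadrilaterals
  have hsb : mg * g2 + mi * ic * c2 = 0 := by linear_combination BE - hh2 * hw
  have hsf : mg * g4 - mj * j4 = 0 := by linear_combination FE - hh4 * hw
  refine ⟨?_, ?_, ?_⟩
  · apply planar4_of_mem3
    have hmrep : vm = (mi * ic * c1) • va + (mg * g4) • vf + (mi * ih) • vh := by
      linear_combination (norm := module) -hmc' - mg • hgc - mi • hic'
        - (mi * ic) • hcc + hsb • vb
    rw [hmrep]
    exact add_mem (add_mem (smul_mem _ _ (m31 (mem_span_singleton_self va)))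
      (smul_mem _ _ (m32 (mem_span_singleton_self vf))))
      (smul_mem _ _ (m33 (mem_span_singleton_self vh)))
  · apply planar4_of_mem3
    have hkk : mk • vk = (mg * g2) • vb + (-(mj * j3)) • vd + mi • vi := by
      linear_combination (norm := module) -hM + mj • hjc - mg • hgc + hsf • vf
    have hrep : vk = mk⁻¹ • (mk • vk) := by
      rw [smul_smul, inv_mul_cancel₀ hmkn, one_smul]
    rw [hrep, hkk]
    exact smul_mem _ _ (add_mem (add_mem (smul_mem _ _ (m31 (mem_span_singleton_self vb)))
      (smul_mem _ _ (m32 (mem_span_singleton_self vd))))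
      (smul_mem _ _ (m33 (mem_span_singleton_self vi))))
  · apply planar4_of_mem3
    have hjj : mj • vj = (mi * ic) • vc + (-(mk * ke)) • ve + mg • vg := by
      linear_combination (norm := module) -hM + mk • hkc - mi • hic' + hw • vh
    have hrep : vj = mj⁻¹ • (mj • vj) := by
      rw [smul_smul, inv_mul_cancel₀ hmjn, one_smul]
    rw [hrep, hjj]
    exact smul_mem _ _ (add_mem (add_mem (smul_mem _ _ (m31 (mem_span_singleton_self vc)))
      (smul_mem _ _ (m32 (mem_span_singleton_self ve))))
      (smul_mem _ _ (m33 (mem_span_singleton_self vg))))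



end TorsalHelpers

theorem one_focal_quad_planar_implies_all
    (L0 L1 L2 L3 L12 L13 L23 L123 : Submodule ℝ V4)
    (h0 : IsLine L0) (h1 : IsLine L1) (h2 : IsLine L2) (h3 : IsLine L3)
    (h12 : IsLine L12) (h13 : IsLine L13) (h23 : IsLine L23) (h123 : IsLine L123)
    -- adjacent lines intersect (the 12 edges of the cube)
    (a01 : L0 ⊓ L1 ≠ ⊥) (a02 : L0 ⊓ L2 ≠ ⊥) (a03 : L0 ⊓ L3 ≠ ⊥)
    (a112 : L1 ⊓ L12 ≠ ⊥) (a113 : L1 ⊓ L13 ≠ ⊥)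
    (a212 : L2 ⊓ L12 ≠ ⊥) (a223 : L2 ⊓ L23 ≠ ⊥)
    (a313 : L3 ⊓ L13 ≠ ⊥) (a323 : L3 ⊓ L23 ≠ ⊥)
    (a12123 : L12 ⊓ L123 ≠ ⊥) (a13123 : L13 ⊓ L123 ≠ ⊥) (a23123 : L23 ⊓ L123 ≠ ⊥)
    -- opposite lines of each face are skew (the 12 face diagonals)
    (s1 : L0 ⊓ L12 = ⊥) (s2 : L1 ⊓ L2 = ⊥)
    (s3 : L0 ⊓ L13 = ⊥) (s4 : L1 ⊓ L3 = ⊥)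
    (s5 : L0 ⊓ L23 = ⊥) (s6 : L2 ⊓ L3 = ⊥)
    (s7 : L1 ⊓ L123 = ⊥) (s8 : L12 ⊓ L13 = ⊥)
    (s9 : L2 ⊓ L123 = ⊥) (s10 : L12 ⊓ L23 = ⊥)
    (s11 : L3 ⊓ L123 = ⊥) (s12 : L13 ⊓ L23 = ⊥)
    -- if one focal quadrilateral is planar ...
    (hone :
      Planar4 (L0 ⊓ L1) (L2 ⊓ L12) (L23 ⊓ L123) (L3 ⊓ L13) ∨
      Planar4 (L0 ⊓ L2) (L1 ⊓ L12) (L13 ⊓ L123) (L3 ⊓ L23) ∨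
      Planar4 (L0 ⊓ L3) (L1 ⊓ L13) (L12 ⊓ L123) (L2 ⊓ L23)) :
    -- ... then all focal quadrilaterals are planar
    Planar4 (L0 ⊓ L1) (L2 ⊓ L12) (L23 ⊓ L123) (L3 ⊓ L13) ∧
    Planar4 (L0 ⊓ L2) (L1 ⊓ L12) (L13 ⊓ L123) (L3 ⊓ L23) ∧
    Planar4 (L0 ⊓ L3) (L1 ⊓ L13) (L12 ⊓ L123) (L2 ⊓ L23) := by
  exact main_lemma L0 L1 L2 L3 L12 L13 L23 L123 h0 h1 h2 h3 h12 h13 h23 h123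
    a01 a02 a03 a112 a113 a212 a223 a313 a323 a12123 a13123 a23123
    s1 s2 s3 s4 s5 s6 s7 s8 s9 s10 s11 s12 hone
end

section
/- Let π₁ ≠ π₂ be planes in ℝP^3. If a projective map τ : π₁ → π₂ fixes the line π₁ ∩ π₂ pointwise, then all lines p ∨ τ(p), for p ∈ π₁ \ π₂ with τ(p) ≠ p, pass through a common point O. -/
/-!
STATEMENT 9: a projective transformation between two distinct planes `π₁`, `π₂`
of `ℝP³` that fixes every point of the axis `π₁ ∩ π₂` is a perspectivity: all
lines `p ∨ τ(p)` for `p ∈ π₁ \ π₂` with `τ(p) ≠ p` pass through a common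
point `O`.

`ℝP³` is modelled by linear subspaces of `ℝ⁴`: planes = rank-3 subspaces.  The
projective map `τ` is induced by a linear map `T` of `ℝ⁴` that is injective on
`π₁` and maps `π₁` onto `π₂`; `τ` fixes a point `[v]` iff `T v` is a scalar
multiple of `v`.
-/

open Submodule

theorem fixing_axis_implies_perspectivity
    (π1 π2 : Submodule ℝ V4)
    (hπ1 : Module.finrank ℝ π1 = 3) (hπ2 : Module.finrank ℝ π2 = 3)
    (hne : π1 ≠ π2)
    (T : V4 →ₗ[ℝ] V4)
    (hmap : Submodule.map T π1 = π2)
    (hinj : ∀ v ∈ π1, T v = 0 → v = 0)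
    -- τ fixes every point of the axis π₁ ∩ π₂
    (hfix : ∀ v ∈ π1 ⊓ π2, ∃ c : ℝ, T v = c • v) :
    -- all lines p ∨ τ(p), for p ∈ π₁ \ π₂ not fixed by τ, pass through a
    -- common point O
    ∃ o : V4, o ≠ 0 ∧
      ∀ v ∈ π1, v ≠ 0 → (¬ ∃ c : ℝ, T v = c • v) →
        o ∈ span ℝ ({v, T v} : Set V4) := by
  set L : Submodule ℝ V4 := π1 ⊓ π2 with hL
  -- π1 ⊔ π2 = ⊤
  have htop : π1 ⊔ π2 = ⊤ := by
    by_contra h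
    have h4 : Module.finrank ℝ V4 = 4 := by simp [Module.finrank_fin_fun]
    have hlt : π1 ⊔ π2 < ⊤ := lt_top_iff_ne_top.2 h
    have hle := Submodule.finrank_lt_finrank_of_lt hlt
    rw [show Module.finrank ℝ (⊤ : Submodule ℝ V4) = 4 by
      simp [finrank_top, Module.finrank_fin_fun]] at hle
    have h1 : π1 ≤ π1 ⊔ π2 := le_sup_left
    have h2 : π2 ≤ π1 ⊔ π2 := le_sup_right
    have h3 : 3 ≤ Module.finrank ℝ ↥(π1 ⊔ π2) := hπ1 ▸ Submodule.finrank_mono h1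
    have hsup3 : Module.finrank ℝ ↥(π1 ⊔ π2) = 3 := by omega
    have e1 : π1 = π1 ⊔ π2 := Submodule.eq_of_le_of_finrank_eq h1 (by omega)
    have e2 : π2 = π1 ⊔ π2 := Submodule.eq_of_le_of_finrank_eq h2 (by omega)
    exact hne (e1.trans e2.symm)
  have hLrank : Module.finrank ℝ L = 2 := by
    have := Submodule.finrank_sup_add_finrank_inf_eq π1 π2
    rw [htop, hπ1, hπ2] at this
    have h4 : Module.finrank ℝ (⊤ : Submodule ℝ V4) = 4 := by
      simp [finrank_top, Module.finrank_fin_fun]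
    rw [h4] at this
    rw [← hL] at this
    omega
  -- there is a single scalar c with T v = c • v on all of L
  obtain ⟨u, huL, hu0⟩ : ∃ u ∈ L, u ≠ 0 := by
    by_contra h
    push_neg at h
    have : L = ⊥ := by
      ext x; simp only [mem_bot]
      exact ⟨fun hx => by by_contra h0; exact h0 (by tauto) |>.elim, fun hx => hx ▸ L.zero_mem⟩
    rw [this, finrank_bot] at hLrank; omega
  obtain ⟨c, hcu⟩ := hfix u huL
  have hc : ∀ v ∈ L, T v = c • v := by
    intro v hvL
    obtain ⟨d, hd⟩ := hfix v hvL
    by_cases hvu : ∃ t : ℝ, v = t • u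
    · obtain ⟨t, rfl⟩ := hvu
      rw [map_smul, hcu, smul_comm]
    · obtain ⟨e, he⟩ := hfix (u + v) (L.add_mem huL hvL)
      rw [map_add, hcu, hd, smul_add] at he
      -- (c-e) • u + (d-e) • v = 0
      have key : (c - e) • u + (d - e) • v = 0 := by
        have := sub_eq_zero.2 he
        rw [← this]; ring_nf; module
      have hde : d = e := by
        by_contra hde
        apply hvu
        refine ⟨(d - e)⁻¹ * (e - c), ?_⟩
        have h2 : (d - e) • v = (e - c) • u := by
          have := key
          linear_combination (norm := module) this
        have h3 : v = (d - e)⁻¹ • ((d - e) • v) := by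
          rw [smul_smul, inv_mul_cancel₀ (sub_ne_zero.2 hde), one_smul]
        rw [h3, h2, smul_smul]
      have hce : c = e := by
        rw [hde] at key
        simp only [sub_self, zero_smul, add_zero] at key
        rcases smul_eq_zero.1 key with h | h
        · exact sub_eq_zero.1 h
        · exact absurd h hu0
      rw [hd, hde, ← hce]
  -- S = T - c • id, restricted to π1
  set S : V4 →ₗ[ℝ] V4 := T - c • LinearMap.id with hS
  set f : π1 →ₗ[ℝ] V4 := S.domRestrict π1 with hf
  have hker : ∀ x : π1, (x : V4) ∈ L → f x = 0 := by
    intro x hx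
    simp only [hf, LinearMap.domRestrict_apply, hS, LinearMap.sub_apply,
      LinearMap.smul_apply, LinearMap.id_apply]
    rw [hc _ hx, sub_self]
  -- rank of f is at most 1
  have hrange : Module.finrank ℝ (LinearMap.range f) ≤ 1 := by
    have hrn := LinearMap.finrank_range_add_finrank_ker f
    rw [hπ1] at hrn
    have hLle : L ≤ π1 := inf_le_left
    set L' : Submodule ℝ π1 := L.comap π1.subtype with hL'
    have hL'ker : L' ≤ LinearMap.ker f := by
      intro x hx
      exact LinearMap.mem_ker.2 (hker x hx)
    have hL'rank : Module.finrank ℝ L' = 2 := by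
      rw [← hLrank]
      exact LinearEquiv.finrank_eq (Submodule.comapSubtypeEquivOfLe hLle)
    have := Submodule.finrank_mono hL'ker
    omega
  by_cases hall : ∀ v ∈ π1, T v = c • v
  · refine ⟨fun _ => 1, ?_, ?_⟩
    · intro h
      have := congrFun h 0
      simp at this
    · intro v hv _ hnc
      exact absurd ⟨c, hall v hv⟩ hnc
  · push_neg at hall
    obtain ⟨w, hwπ, hw⟩ := hall
    set o : V4 := T w - c • w with ho
    have ho0 : o ≠ 0 := fun h => hw (by rwa [ho, sub_eq_zero] at h)
    have horange : o ∈ LinearMap.range f := ⟨⟨w, hwπ⟩, by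
      simp [hf, hS, ho]⟩
    have hspan : LinearMap.range f = span ℝ {o} := by
      refine (Submodule.eq_of_le_of_finrank_le ?_ ?_).symm
      · rwa [span_singleton_le_iff_mem]
      · rwa [finrank_span_singleton ho0]
    refine ⟨o, ho0, ?_⟩
    intro v hv hv0 hnc
    have hx : T v - c • v ∈ LinearMap.range f := ⟨⟨v, hv⟩, by simp [hf, hS]⟩
    rw [hspan, mem_span_singleton] at hx
    obtain ⟨t, ht⟩ := hx
    have ht0 : t ≠ 0 := by
      rintro rfl
      rw [zero_smul] at ht
      exact hnc ⟨c, sub_eq_zero.1 ht.symm⟩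
    have : o = t⁻¹ • (T v - c • v) := by
      rw [← ht, smul_smul, inv_mul_cancel₀ ht0, one_smul]
    rw [this]
    have hvmem : v ∈ span ℝ ({v, T v} : Set V4) := subset_span (by simp)
    have hTvmem : T v ∈ span ℝ ({v, T v} : Set V4) := subset_span (by simp)
    exact smul_mem _ _ (sub_mem hTvmem (smul_mem _ _ hvmem))
end

section
/- Uniqueness of the connecting projective reflection for frames: let x ≠ x_i be points of ℝP^3 and let T = (t¹,t²,t³), T_i = (t¹_i,t²_i,t³_i) be triples of lines with t^j ∋ x, t^j_i ∋ x_i, such that t^j and t^j_i intersect in a point p^j ∉ {x, x_i} for each j, and the three points p¹, p², p³ span a plane π not containing x or x_i. Then there is exactly one projective reflection f induced by a point o and the plane π (o ∉ π) with f(x) = x_i and f(t^j) = t^j_i for j = 1,2,3; its center o is the unique point on the line x ∨ x_i with cr(x, q, x_i, o) = −1, where q = π ∩ (x ∨ x_i). -/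
/-!
`ℝP³` is modelled by linear subspaces of `ℝ⁴`: points = rank 1, lines = rank 2,
planes = rank 3.  The projective reflection with center `[w]` and hyperplane
`π` (with `ℝ⁴ = π ⊕ ℝw`) is induced by the linear involution fixing `π` and
negating `w`, i.e. `2·projπ - id`.  The cross-ratio condition
`cr(X, P, Y, Q) = -1` is encoded by `Harmonic`.

Write `x = [a]`, `xᵢ = [b]`. As `ℝ⁴ = π ⊕ ℝa`, `b` can be rescaled so that
`b - a ∈ π`. The linear reflection `f` with hyperplane `π` and center `[w]` is
characterised by `v + f v ∈ π` and `v - f v ∈ ℝw`. So `f a = μ b` forces `μ = -1`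
and `a + b ∈ ℝw`; conversely `w = a + b` works, and as `f` fixes each `pʲ ∈ π` it maps
`tʲ = x ∨ pʲ` to `xᵢ ∨ pʲ = tʲᵢ`. Finally `q = [b - a]`, and `u = b - a`,
`v = -(a + b)` give `u + v = -2a`, `u - v = 2b`.
-/

open Submodule

def IsPoint (P : Submodule ℝ V4) : Prop := Module.finrank ℝ P = 1
/-- The linear map inducing the projective reflection with hyperplane `π` and
center `[w]`: it fixes `π` pointwise and negates the `w`-component. -/
noncomputable def reflMap (π : Submodule ℝ V4) (w : V4)
    (h : IsCompl π (span ℝ {w})) : V4 →ₗ[ℝ] V4 :=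
  (2 : ℝ) • (π.subtype ∘ₗ Submodule.linearProjOfIsCompl π (span ℝ {w}) h) -
    LinearMap.id

/-- `Harmonic X P Y Q` encodes the cross-ratio condition `cr(X, P, Y, Q) = -1`
for four collinear points. -/
def Harmonic (X P Y Q : Submodule ℝ V4) : Prop :=
  ∃ u v : V4, u ≠ 0 ∧ v ≠ 0 ∧ P = span ℝ {u} ∧ Q = span ℝ {v} ∧
    X = span ℝ {u + v} ∧ Y = span ℝ {u - v}

/-- The point `o` is a center of a projective reflection with plane `π`
mapping `x ↦ xi` and `t j ↦ ti j` for all `j`. -/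
def IsReflCenter (π : Submodule ℝ V4) (x xi : Submodule ℝ V4)
    (t ti : Fin 3 → Submodule ℝ V4) (o : Submodule ℝ V4) : Prop :=
  IsPoint o ∧ ¬ o ≤ π ∧
    ∃ w : V4, w ≠ 0 ∧ o = span ℝ {w} ∧
      ∃ h : IsCompl π (span ℝ {w}),
        Submodule.map (reflMap π w h) x = xi ∧
        ∀ j : Fin 3, Submodule.map (reflMap π w h) (t j) = ti j

open Module

section LinearAlgebra

variable {K V : Type*} [Field K] [AddCommGroup V] [Module K V]

theorem eq_span_singleton_of_finrank_eq_one {P : Submodule K V} (hP : finrank K P = 1)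
    {v : V} (hvP : v ∈ P) (hv : v ≠ 0) : P = K ∙ v := by
  have : FiniteDimensional K P := finite_of_finrank_eq_succ hP
  exact (eq_of_le_of_finrank_eq ((span_singleton_le_iff_mem v P).mpr hvP)
    (by rw [hP, finrank_span_singleton hv])).symm

theorem exists_eq_span_singleton_of_finrank_eq_one {P : Submodule K V}
    (hP : finrank K P = 1) : ∃ v, P = K ∙ v := by
  obtain ⟨v, hvP, hv⟩ := P.exists_mem_ne_zero_of_ne_bot (by rintro rfl; simp at hP)
  exact ⟨v, eq_span_singleton_of_finrank_eq_one hP hvP hv⟩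

theorem eq_sup_of_finrank_eq_two {L P Q : Submodule K V} (hL : finrank K L = 2)
    (hP : finrank K P = 1) (hQ : finrank K Q = 1) (hPQ : P ≠ Q) (hPL : P ≤ L) (hQL : Q ≤ L) :
    L = P ⊔ Q := by
  have : FiniteDimensional K L := finite_of_finrank_eq_succ hL
  have : FiniteDimensional K P := finite_of_finrank_eq_succ hP
  have : FiniteDimensional K ↥(P ⊔ Q) := Submodule.finiteDimensional_of_le (sup_le hPL hQL)
  have hQP : ¬ Q ≤ P := fun h => hPQ (eq_of_le_of_finrank_eq h (hQ.trans hP.symm)).symm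
  have hlt := Submodule.finrank_lt_finrank_of_lt (left_lt_sup.mpr hQP)
  exact (eq_of_le_of_finrank_le (sup_le hPL hQL) (by omega)).symm

theorem isCompl_span_singleton_of_finrank_add_one [FiniteDimensional K V]
    {π : Submodule K V} (hπ : finrank K π + 1 = finrank K V) {w : V} (hw : w ∉ π) :
    IsCompl π (K ∙ w) := by
  have hdisj := disjoint_span_singleton_of_notMem hw
  refine ⟨hdisj, codisjoint_iff.mpr (eq_top_of_finrank_eq ?_)⟩
  have h := finrank_sup_add_finrank_inf_eq π (K ∙ w)
  rw [hdisj.eq_bot, finrank_bot,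
    finrank_span_singleton (ne_of_mem_of_not_mem π.zero_mem hw).symm] at h
  omega

theorem exists_eq_span_singleton_sub_mem {π : Submodule K V} {a : V} (h : IsCompl π (K ∙ a))
    {P : Submodule K V} (hP : finrank K P = 1) (hPπ : ¬ P ≤ π) :
    ∃ b, P = K ∙ b ∧ b - a ∈ π := by
  obtain ⟨b₀, rfl⟩ := exists_eq_span_singleton_of_finrank_eq_one hP
  obtain ⟨p, hp, _, hca, rfl⟩ := mem_sup.mp (h.sup_eq_top ▸ mem_top : b₀ ∈ π ⊔ K ∙ a)
  obtain ⟨c, rfl⟩ := mem_span_singleton.mp hca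
  have hc : c ≠ 0 := by
    rintro rfl
    exact hPπ ((span_singleton_le_iff_mem _ π).mpr (by simpa using hp))
  refine ⟨c⁻¹ • (p + c • a), (span_singleton_smul_eq (inv_ne_zero hc).isUnit _).symm, ?_⟩
  convert π.smul_mem c⁻¹ hp using 1
  rw [smul_add, smul_smul, inv_mul_cancel₀ hc, one_smul, add_sub_cancel_right]

theorem add_notMem_of_sub_mem [NeZero (2 : K)] {π : Submodule K V} {a b : V} (ha : a ∉ π)
    (hab : b - a ∈ π) : a + b ∉ π := by
  intro hsum
  have h2a : (2 : K) • a ∈ π := by convert sub_mem hsum hab using 1; module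
  exact ha ((π.smul_mem_iff two_ne_zero).mp h2a)

theorem span_singleton_sup_inf_eq {π : Submodule K V} {a b : V} (ha : a ∉ π)
    (hab : b - a ∈ π) : (K ∙ a ⊔ K ∙ b) ⊓ π = K ∙ (b - a) := by
  refine le_antisymm (fun v hv => ?_) ?_
  · obtain ⟨hv, hvπ⟩ := mem_inf.mp hv
    obtain ⟨_, hr, _, hs, rfl⟩ := mem_sup.mp hv
    obtain ⟨r, rfl⟩ := mem_span_singleton.mp hr
    obtain ⟨s, rfl⟩ := mem_span_singleton.mp hs
    have hrs : (r + s) • a ∈ π := by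
      convert sub_mem hvπ (π.smul_mem s hab) using 1
      module
    have hrs0 : r + s = 0 := by
      by_contra hne
      exact ha ((π.smul_mem_iff hne).mp hrs)
    exact mem_span_singleton.mpr ⟨s, by rw [eq_neg_of_add_eq_zero_left hrs0]; module⟩
  · rw [span_singleton_le_iff_mem]
    exact mem_inf.mpr ⟨sub_mem (mem_sup_right (mem_span_singleton_self b))
      (mem_sup_left (mem_span_singleton_self a)), hab⟩

end LinearAlgebra

section Reflection

variable {π : Submodule ℝ V4} {w : V4} (h : IsCompl π (ℝ ∙ w))

theorem reflMap_apply (v : V4) :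
    reflMap π w h v = (2 : ℝ) • π.projection (ℝ ∙ w) h v - v := rfl

theorem add_reflMap_apply_mem (v : V4) : v + reflMap π w h v ∈ π := by
  rw [reflMap_apply, add_sub_cancel]
  exact π.smul_mem 2 (projection_apply_mem h v)

theorem sub_reflMap_apply_mem (v : V4) : v - reflMap π w h v ∈ ℝ ∙ w := by
  convert (ℝ ∙ w).smul_mem 2 (sub_projection_mem h v) using 1
  rw [reflMap_apply]
  module

theorem reflMap_apply_eq_iff {v u : V4} :
    reflMap π w h v = u ↔ v + u ∈ π ∧ v - u ∈ ℝ ∙ w := by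
  refine ⟨fun hu => hu ▸ ⟨add_reflMap_apply_mem h v, sub_reflMap_apply_mem h v⟩,
    fun ⟨hπ, hw⟩ => ?_⟩
  have hdπ : u - reflMap π w h v ∈ π := by
    convert sub_mem hπ (add_reflMap_apply_mem h v) using 1
    abel
  have hdw : u - reflMap π w h v ∈ ℝ ∙ w := by
    convert sub_mem (sub_reflMap_apply_mem h v) hw using 1
    abel
  exact (sub_eq_zero.mp (disjoint_def.mp h.disjoint _ hdπ hdw)).symm

theorem map_reflMap_of_le {P : Submodule ℝ V4} (hP : P ≤ π) : map (reflMap π w h) P = P := by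
  have hfix : ∀ v ∈ P, reflMap π w h v = v := fun v hv =>
    (reflMap_apply_eq_iff h).mpr ⟨add_mem (hP hv) (hP hv), by simp⟩
  ext v
  refine ⟨?_, fun hv => ⟨v, hv, hfix v hv⟩⟩
  rintro ⟨u, hu, rfl⟩
  rwa [hfix u hu]

end Reflection

theorem map_reflMap_add_span_singleton {π : Submodule ℝ V4} {a b : V4} (hab : b - a ∈ π)
    (h : IsCompl π (ℝ ∙ (a + b))) : map (reflMap π (a + b) h) (ℝ ∙ a) = ℝ ∙ b := by
  have hfa : reflMap π (a + b) h a = -b :=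
    (reflMap_apply_eq_iff h).mpr
      ⟨by simpa [← sub_eq_add_neg] using π.neg_mem hab, by simp [mem_span_singleton_self]⟩
  rw [map_span, Set.image_singleton, hfa, ← Set.neg_singleton, span_neg]

theorem span_singleton_eq_of_reflMap_apply_mem {π : Submodule ℝ V4} {w a b : V4}
    (h : IsCompl π (ℝ ∙ w)) (ha : a ∉ π) (hab : b - a ∈ π)
    (hfa : reflMap π w h a ∈ ℝ ∙ b) : ℝ ∙ w = ℝ ∙ (a + b) := by
  obtain ⟨μ, hμ⟩ := mem_span_singleton.mp hfa
  have hμ1 : μ = -1 := by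
    have hsum : (1 + μ) • a ∈ π := by
      convert sub_mem (hμ ▸ add_reflMap_apply_mem h a) (π.smul_mem μ hab) using 1
      module
    by_contra hne
    exact ha ((π.smul_mem_iff (fun h0 => hne (by linear_combination h0))).mp hsum)
  have hsub : a + b ∈ ℝ ∙ w := by
    convert sub_reflMap_apply_mem h a using 1
    rw [← hμ, hμ1]
    module
  obtain ⟨c, hc⟩ := mem_span_singleton.mp hsub
  have hc0 : c ≠ 0 := by
    rintro rfl
    exact add_notMem_of_sub_mem ha hab (by simp [← hc])
  rw [← hc, span_singleton_smul_eq hc0.isUnit]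

theorem harmonic_span_singleton_sub_add {a b : V4} (hab : b ≠ a) (hab' : a + b ≠ 0) :
    Harmonic (ℝ ∙ a) (ℝ ∙ (b - a)) (ℝ ∙ b) (ℝ ∙ (a + b)) := by
  refine ⟨b - a, -(a + b), sub_ne_zero.mpr hab, neg_ne_zero.mpr hab', rfl, ?_, ?_, ?_⟩
  · rw [← Set.neg_singleton, span_neg]
  · rw [show b - a + -(a + b) = (-2 : ℝ) • a by module,
      span_singleton_smul_eq (by norm_num : (-2 : ℝ) ≠ 0).isUnit]
  · rw [show b - a - -(a + b) = (2 : ℝ) • b by module,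
      span_singleton_smul_eq (two_ne_zero : (2 : ℝ) ≠ 0).isUnit]

theorem unique_connecting_projective_reflection
    (x xi : Submodule ℝ V4) (hx : IsPoint x) (hxi : IsPoint xi) (hne : x ≠ xi)
    (t ti : Fin 3 → Submodule ℝ V4)
    (ht : ∀ j, IsLine (t j)) (hti : ∀ j, IsLine (ti j))
    (hxt : ∀ j, x ≤ t j) (hxiti : ∀ j, xi ≤ ti j)
    (hmeet : ∀ j, IsPoint (t j ⊓ ti j))
    (hpx : ∀ j, t j ⊓ ti j ≠ x) (hpxi : ∀ j, t j ⊓ ti j ≠ xi)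
    (π : Submodule ℝ V4)
    (hπ : π = (t 0 ⊓ ti 0) ⊔ (t 1 ⊓ ti 1) ⊔ (t 2 ⊓ ti 2))
    (hπrank : Module.finrank ℝ π = 3)
    (hxπ : ¬ x ≤ π) (hxiπ : ¬ xi ≤ π) :
    (∃! o : Submodule ℝ V4, IsReflCenter π x xi t ti o) ∧
    ∀ o : Submodule ℝ V4, IsReflCenter π x xi t ti o →
      o ≤ x ⊔ xi ∧ Harmonic x ((x ⊔ xi) ⊓ π) xi o := by
  have hcompl : ∀ {v : V4}, v ∉ π → IsCompl π (ℝ ∙ v) :=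
    isCompl_span_singleton_of_finrank_add_one (by rw [hπrank, finrank_fin_fun])
  obtain ⟨a, rfl⟩ := exists_eq_span_singleton_of_finrank_eq_one hx
  have haπ : a ∉ π := fun ha => hxπ ((span_singleton_le_iff_mem a π).mpr ha)
  obtain ⟨b, rfl, hab⟩ := exists_eq_span_singleton_sub_mem (hcompl haπ) hxi hxiπ
  have hwπ : a + b ∉ π := add_notMem_of_sub_mem haπ hab
  have hw0 : a + b ≠ 0 := (ne_of_mem_of_not_mem π.zero_mem hwπ).symm
  have hfx := map_reflMap_add_span_singleton hab (hcompl hwπ)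
  have hpπ : ∀ j, t j ⊓ ti j ≤ π := by
    intro j
    rw [hπ]
    fin_cases j
    exacts [le_sup_of_le_left le_sup_left, le_sup_of_le_left le_sup_right, le_sup_right]
  have hcenter : IsReflCenter π (ℝ ∙ a) (ℝ ∙ b) t ti (ℝ ∙ (a + b)) := by
    refine ⟨finrank_span_singleton hw0, fun hle => hwπ (hle (mem_span_singleton_self _)),
      a + b, hw0, rfl, hcompl hwπ, hfx, fun j => ?_⟩
    rw [eq_sup_of_finrank_eq_two (ht j) hx (hmeet j) (hpx j).symm (hxt j) inf_le_left,
      Submodule.map_sup, hfx, map_reflMap_of_le _ (hpπ j),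
      ← eq_sup_of_finrank_eq_two (hti j) hxi (hmeet j) (hpxi j).symm (hxiti j) inf_le_right]
  have hunique : ∀ o, IsReflCenter π (ℝ ∙ a) (ℝ ∙ b) t ti o → o = ℝ ∙ (a + b) := by
    rintro o ⟨-, -, w, -, rfl, h, hfx', -⟩
    exact span_singleton_eq_of_reflMap_apply_mem h haπ hab
      (hfx' ▸ mem_map_of_mem (mem_span_singleton_self a))
  refine ⟨⟨_, hcenter, hunique⟩, fun o ho => ?_⟩
  rw [hunique o ho, span_singleton_sup_inf_eq haπ hab, span_singleton_le_iff_mem]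
  exact ⟨add_mem (mem_sup_left (mem_span_singleton_self a))
      (mem_sup_right (mem_span_singleton_self b)),
    harmonic_span_singleton_sub_add (by rintro rfl; exact hne rfl) hw0⟩
end

section
/- Planarity criterion via a transversal line: a regular C¹ curve c : I → ℝP^3 all of whose tangent lines meet a fixed line l (with c(t) ∉ l for all t) is planar, i.e., its image is contained in a plane through l. -/
/-!
Modulo `L` the tangent condition says that the image `c` of `γ` in the plane `ℝ⁴ ⧸ L` is a
nonvanishing curve with radial velocity, `c' = k c`.  Choosing a Euclidean structure on the
quotient, `⟪c₀, c⟫² / ‖c‖²` (the squared cosine of the angle between `c` and `c₀ = c t₀`) has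
derivative `(2k - 2k) ⟪c₀, c⟫² / ‖c‖² = 0`, so it keeps its value `‖c₀‖²` at `t₀`; equality in
Cauchy–Schwarz then puts every `c t` on the line `ℝ c₀`, i.e. `γ t ∈ L ⊔ ℝ γ t₀`.
-/

open Submodule

theorem mem_sup_span_singleton_of_span_pair_inf_ne_bot {K V : Type*} [DivisionRing K]
    [AddCommGroup V] [Module K V] {L : Submodule K V} {x y : V} (hx : x ∉ L)
    (h : span K {x, y} ⊓ L ≠ ⊥) : y ∈ L ⊔ span K {x} := by
  obtain ⟨v, hv, hv0⟩ := (Submodule.ne_bot_iff _).mp h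
  obtain ⟨α, β, rfl⟩ := mem_span_pair.mp (mem_inf.mp hv).1
  have hvL := (mem_inf.mp hv).2
  have hβ : β ≠ 0 := by
    rintro rfl
    have hα : α ≠ 0 := by rintro rfl; simp at hv0
    exact hx ((L.smul_mem_iff hα).mp (by simpa using hvL))
  rw [← smul_mem_iff _ hβ, show β • y = (α • x + β • y) - α • x by abel]
  exact sub_mem (mem_sup_left hvL) (mem_sup_right (smul_mem _ _ (mem_span_singleton_self x)))

theorem LinearMap.apply_mem_span_singleton_iff {R M M₂ : Type*} [Ring R] [AddCommGroup M]
    [Module R M] [AddCommGroup M₂] [Module R M₂] (f : M →ₗ[R] M₂) {x y : M} :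
    f x ∈ span R {f y} ↔ x ∈ LinearMap.ker f ⊔ span R {y} := by
  rw [← Set.image_singleton, ← map_span, ← mem_comap, comap_map_eq, sup_comm]

section InnerProductSpace

open scoped RealInnerProductSpace

variable {F : Type*} [NormedAddCommGroup F] [InnerProductSpace ℝ F]

theorem hasDerivAt_inner_sq_div_norm_sq_of_hasDerivAt_smul {c : ℝ → F} {t k : ℝ}
    (hc : HasDerivAt c (k • c t) t) (hne : c t ≠ 0) (v : F) :
    HasDerivAt (fun s => ⟪v, c s⟫ ^ 2 / ‖c s‖ ^ 2) 0 t := by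
  have hnorm : ‖c t‖ ^ 2 ≠ 0 := by positivity
  refine (((hasDerivAt_const t v).inner ℝ hc).pow 2 |>.div hc.norm_sq hnorm).congr_deriv ?_
  simp only [Pi.pow_apply, inner_smul_right, inner_zero_left, add_zero,
    real_inner_self_eq_norm_sq]
  field_simp
  ring

theorem mem_span_singleton_of_hasDerivAt_smul {c : ℝ → F} {s : Set ℝ} (hs : IsOpen s)
    (hs' : IsPreconnected s) (hne : ∀ t ∈ s, c t ≠ 0)
    (hc : ∀ t ∈ s, ∃ k : ℝ, HasDerivAt c (k • c t) t) {t₀ t : ℝ} (ht₀ : t₀ ∈ s) (ht : t ∈ s) :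
    c t ∈ span ℝ {c t₀} := by
  have hderiv : ∀ t ∈ s, HasDerivAt (fun s => ⟪c t₀, c s⟫ ^ 2 / ‖c s‖ ^ 2) 0 t := fun t ht =>
    (hc t ht).elim fun _ hk => hasDerivAt_inner_sq_div_norm_sq_of_hasDerivAt_smul hk (hne t ht) _
  have hconst := hs.is_const_of_deriv_eq_zero hs'
    (fun t ht => (hderiv t ht).differentiableAt.differentiableWithinAt)
    (fun t ht => (hderiv t ht).deriv) ht ht₀
  have h₀ := norm_pos_iff.mpr (hne t₀ ht₀)
  have h := norm_pos_iff.mpr (hne t ht)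
  simp only [real_inner_self_eq_norm_sq] at hconst
  have hcs : ‖⟪c t₀, c t⟫‖ = ‖c t₀‖ * ‖c t‖ := by
    rw [Real.norm_eq_abs, ← sq_eq_sq₀ (abs_nonneg _) (by positivity), sq_abs]
    field_simp at hconst
    linarith
  obtain ⟨r, -, hr⟩ := (norm_inner_eq_norm_iff (hne t₀ ht₀) (hne t ht)).mp hcs
  exact mem_span_singleton.mpr ⟨r, hr.symm⟩

end InnerProductSpace

theorem mem_sup_span_singleton_of_deriv_mem_sup_span_singleton {E : Type*}
    [NormedAddCommGroup E] [NormedSpace ℝ E] [FiniteDimensional ℝ E] {L : Submodule ℝ E}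
    {γ : ℝ → E} {s : Set ℝ} (hs : IsOpen s) (hs' : IsPreconnected s)
    (hdiff : ∀ t ∈ s, DifferentiableAt ℝ γ t) (hoff : ∀ t ∈ s, γ t ∉ L)
    (hderiv : ∀ t ∈ s, deriv γ t ∈ L ⊔ span ℝ {γ t}) {t₀ t : ℝ} (ht₀ : t₀ ∈ s) (ht : t ∈ s) :
    γ t ∈ L ⊔ span ℝ {γ t₀} := by
  let π := (LinearEquiv.ofFinrankEq (E ⧸ L) (EuclideanSpace ℝ (Fin (Module.finrank ℝ (E ⧸ L))))
    finrank_euclideanSpace_fin.symm).toLinearMap ∘ₗ L.mkQ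
  have hker : LinearMap.ker π = L := by simp [π, LinearEquiv.ker_comp]
  rw [← hker] at hoff hderiv ⊢
  rw [← π.apply_mem_span_singleton_iff]
  refine mem_span_singleton_of_hasDerivAt_smul (c := π ∘ γ) hs hs'
    (fun t ht => by simpa using hoff t ht) (fun t ht => ?_) ht₀ ht
  obtain ⟨k, hk⟩ := mem_span_singleton.mp (π.apply_mem_span_singleton_iff.mpr (hderiv t ht))
  exact ⟨k, hk ▸ π.toContinuousLinearMap.hasFDerivAt.comp_hasDerivAt t (hdiff t ht).hasDerivAt⟩

theorem tangents_meet_line_implies_planar_general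
    (γ : ℝ → V4) (a b : ℝ)
    (L : Submodule ℝ V4) (hL : Module.finrank ℝ L = 2)
    -- C¹ regular lift
    (hdiff : ∀ t ∈ Set.Ioo a b, DifferentiableAt ℝ γ t)
    -- every tangent line meets `l` ...
    (hmeet : ∀ t ∈ Set.Ioo a b, span ℝ ({γ t, deriv γ t} : Set V4) ⊓ L ≠ ⊥)
    -- ... while the curve avoids `l`
    (hoff : ∀ t ∈ Set.Ioo a b, γ t ∉ L) :
    ∃ W : Submodule ℝ V4, Module.finrank ℝ W = 3 ∧ L ≤ W ∧
      ∀ t ∈ Set.Ioo a b, γ t ∈ W := by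
  obtain ⟨v, hv, hγ⟩ : ∃ v ∉ L, ∀ t ∈ Set.Ioo a b, γ t ∈ L ⊔ span ℝ {v} := by
    rcases (Set.Ioo a b).eq_empty_or_nonempty with hempty | ⟨t₀, ht₀⟩
    · obtain ⟨v, -, hv⟩ :=
        SetLike.exists_of_lt (lt_top_of_finrank_lt_finrank (s := L) (by simp [hL]))
      exact ⟨v, hv, by simp [hempty]⟩
    · have htangent : ∀ t ∈ Set.Ioo a b, deriv γ t ∈ L ⊔ span ℝ {γ t} := fun t ht =>
        mem_sup_span_singleton_of_span_pair_inf_ne_bot (hoff t ht) (hmeet t ht)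
      exact ⟨γ t₀, hoff t₀ ht₀, fun t ht => mem_sup_span_singleton_of_deriv_mem_sup_span_singleton
        isOpen_Ioo isPreconnected_Ioo hdiff hoff htangent ht₀ ht⟩
  exact ⟨L ⊔ span ℝ {v}, by rw [finrank_sup_span_singleton hv, hL], le_sup_left, hγ⟩

theorem tangents_meet_line_implies_planar
    (γ : ℝ → V4) (a b : ℝ)
    (L : Submodule ℝ V4) (hL : Module.finrank ℝ L = 2)
    -- C¹ regular lift
    (hdiff : ∀ t ∈ Set.Ioo a b, DifferentiableAt ℝ γ t)
    (hcont : ContinuousOn (deriv γ) (Set.Ioo a b))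
    (hreg : ∀ t ∈ Set.Ioo a b, LinearIndependent ℝ ![γ t, deriv γ t])
    -- every tangent line meets `l` ...
    (hmeet : ∀ t ∈ Set.Ioo a b, span ℝ ({γ t, deriv γ t} : Set V4) ⊓ L ≠ ⊥)
    -- ... while the curve avoids `l`
    (hoff : ∀ t ∈ Set.Ioo a b, γ t ∉ L) :
    ∃ W : Submodule ℝ V4, Module.finrank ℝ W = 3 ∧ L ≤ W ∧
      ∀ t ∈ Set.Ioo a b, γ t ∈ W :=
  tangents_meet_line_implies_planar_general γ a b L hL hdiff hmeet hoff
end
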